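/- Let s ∈ [0,1/2], let |ψ⟩ = (1/√2)|0⟩⊗|0⟩ + √(s/2)|1⟩⊗|1⟩ + √((1−s)/2)|2⟩⊗|2⟩ ∈ ℂ³⊗ℂ³, and let σ = ∑_{k=0,1} (I₃⊗K_k)|ψ⟩⟨ψ|(I₃⊗K_k)† be the state obtained by applying N_s to the second factor. Then S(Tr_b σ) + S(Tr_a σ) − S(σ) = 2, where Tr_b and Tr_a are the partial traces over the second and first tensor factors respectively. (This shows the entanglement-assisted classical capacity satisfies C_E(N_s) ≥ 2 for all s ∈ [0,1/2].) -/

import Mathlib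

/-!
The output state factors as `σ = V Vᴴ`, where the columns of the 9 × 2 matrix `V` are
`(I ⊗ K₀)ψ = √(s/2) (|00⟩ + |12⟩)` and `(I ⊗ K₁)ψ = √((1-s)/2) (|01⟩ + |22⟩)`.
Since `V Vᴴ` and `Vᴴ V` have the same nonzero eigenvalues and `Vᴴ V = diag(s, 1-s)`, the entropy
of `σ` is the binary entropy `h(s)`. Both marginals are diagonal, `diag(1/2, s/2, (1-s)/2)` up to
order, so each has entropy `1 + h(s)/2`.
-/

open Matrix Kronecker ComplexOrder

/-- Von Neumann entropy (base-2) of a matrix: −∑ λᵢ log₂ λᵢ over its eigenvalues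
(0 if the matrix is not Hermitian). -/
noncomputable def vnEntropy {n : Type*} [Fintype n] [DecidableEq n]
    (ρ : Matrix n n ℂ) : ℝ :=
  if h : ρ.IsHermitian then -∑ i, (h.eigenvalues i) * Real.logb 2 (h.eigenvalues i) else 0

/-- Partial trace over the second tensor factor. -/
noncomputable def ptraceB {m n : ℕ}
    (M : Matrix (Fin m × Fin n) (Fin m × Fin n) ℂ) :
    Matrix (Fin m) (Fin m) ℂ :=
  Matrix.of fun i k => ∑ j, M (i, j) (k, j)

/-- Partial trace over the first tensor factor. -/
noncomputable def ptraceA {m n : ℕ}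
    (M : Matrix (Fin m × Fin n) (Fin m × Fin n) ℂ) :
    Matrix (Fin n) (Fin n) ℂ :=
  Matrix.of fun j l => ∑ i, M (i, j) (i, l)

/-- Kraus operator K₀ = √s|0⟩⟨0| + |2⟩⟨1| of N_s. -/
noncomputable def Kr0 (s : ℝ) : Matrix (Fin 3) (Fin 3) ℂ :=
  !![(Real.sqrt s : ℂ), 0, 0; 0, 0, 0; 0, 1, 0]

/-- Kraus operator K₁ = √(1−s)|1⟩⟨0| + |2⟩⟨2| of N_s. -/
noncomputable def Kr1 (s : ℝ) : Matrix (Fin 3) (Fin 3) ℂ :=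
  !![0, 0, 0; (Real.sqrt (1 - s) : ℂ), 0, 0; 0, 0, 1]

/-- |ψ⟩ = (1/√2)|0⟩⊗|0⟩ + √(s/2)|1⟩⊗|1⟩ + √((1−s)/2)|2⟩⊗|2⟩. -/
noncomputable def psiEA (s : ℝ) : Fin 3 × Fin 3 → ℂ := fun p =>
  if p = (0, 0) then (Real.sqrt (1/2) : ℂ)
  else if p = (1, 1) then (Real.sqrt (s/2) : ℂ)
  else if p = (2, 2) then (Real.sqrt ((1 - s)/2) : ℂ) else 0

section Entropy

open Polynomial

variable {m n : Type*} [Fintype m] [DecidableEq m] [Fintype n] [DecidableEq n]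

lemma vnEntropy_eq_neg_sum_roots_charpoly {A : Matrix n n ℂ} (hA : A.IsHermitian) :
    vnEntropy A = -(A.charpoly.roots.map fun z => z.re * Real.logb 2 z.re).sum := by
  rw [vnEntropy, dif_pos hA, hA.roots_charpoly_eq_eigenvalues, Multiset.map_map]
  rfl

/-- The extra roots are zeros, which contribute `0 * logb 2 0 = 0`. -/
lemma vnEntropy_eq_of_X_pow_mul_charpoly_eq {A : Matrix m m ℂ} {B : Matrix n n ℂ}
    (hA : A.IsHermitian) (hB : B.IsHermitian) {k l : ℕ}
    (h : X ^ k * A.charpoly = X ^ l * B.charpoly) : vnEntropy A = vnEntropy B := by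
  have hroots := congrArg Polynomial.roots h
  rw [roots_mul ((monic_X_pow k).mul A.charpoly_monic).ne_zero,
    roots_mul ((monic_X_pow l).mul B.charpoly_monic).ne_zero, roots_X_pow, roots_X_pow] at hroots
  have hsum := congrArg (fun r : Multiset ℂ => (r.map fun z => z.re * Real.logb 2 z.re).sum) hroots
  simp only [Multiset.map_add, Multiset.sum_add, Multiset.map_nsmul, Multiset.sum_nsmul,
    Multiset.map_singleton, Multiset.sum_singleton, Complex.zero_re, zero_mul, smul_zero,
    zero_add] at hsum
  rw [vnEntropy_eq_neg_sum_roots_charpoly hA, vnEntropy_eq_neg_sum_roots_charpoly hB, hsum]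

lemma vnEntropy_mul_conjTranspose_self (V : Matrix m n ℂ) :
    vnEntropy (V * Vᴴ) = vnEntropy (Vᴴ * V) :=
  vnEntropy_eq_of_X_pow_mul_charpoly_eq (Matrix.isHermitian_mul_conjTranspose_self V)
    (Matrix.isHermitian_conjTranspose_mul_self V) (Matrix.charpoly_mul_comm' V Vᴴ)

lemma vnEntropy_diagonal (d : n → ℝ) :
    vnEntropy (Matrix.diagonal fun i => (d i : ℂ)) = -∑ i, d i * Real.logb 2 (d i) := by
  have hd : IsSelfAdjoint fun i => (d i : ℂ) := by
    ext i; simp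
  have hcharpoly : (Matrix.diagonal fun i => (d i : ℂ)).charpoly =
      ((Finset.univ.val.map fun i => (d i : ℂ)).map fun z => X - C z).prod := by
    rw [Matrix.charpoly_diagonal, Finset.prod_eq_multiset_prod, Multiset.map_map]
    rfl
  rw [vnEntropy_eq_neg_sum_roots_charpoly (Matrix.isHermitian_diagonal_of_self_adjoint _ hd),
    hcharpoly, roots_multiset_prod_X_sub_C, Multiset.map_map]
  simp only [Function.comp_def, Complex.ofReal_re]
  rfl

end Entropy

lemma mul_vecMulVec_star_mul_conjTranspose {m n : Type*} [Fintype n] (M : Matrix m n ℂ)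
    (x : n → ℂ) : M * vecMulVec x (star x) * Mᴴ = vecMulVec (M *ᵥ x) (star (M *ᵥ x)) := by
  rw [mul_vecMulVec, vecMulVec_mul, star_mulVec]

lemma mul_eq_sum_vecMulVec {l m n α : Type*} [Fintype m] [NonUnitalNonAssocSemiring α]
    (A : Matrix l m α) (B : Matrix m n α) : A * B = ∑ k, vecMulVec (Aᵀ k) (B k) := by
  ext i j
  simp [mul_apply, vecMulVec_apply, Matrix.sum_apply]

noncomputable def outputFactor (s : ℝ) : Matrix (Fin 3 × Fin 3) (Fin 2) ℂ :=
  of fun p k => ![if p = (0, 0) ∨ p = (1, 2) then (Real.sqrt (s/2) : ℂ) else 0,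
    if p = (0, 1) ∨ p = (2, 2) then (Real.sqrt ((1 - s)/2) : ℂ) else 0] k

lemma kron_Kr0_mulVec_psiEA (s : ℝ) :
    ((1 : Matrix (Fin 3) (Fin 3) ℂ) ⊗ₖ Kr0 s) *ᵥ psiEA s = (outputFactor s)ᵀ 0 := by
  funext p
  fin_cases p <;>
    simp [mulVec, dotProduct, Fintype.sum_prod_type, Fin.sum_univ_three, one_apply, Kr0, psiEA,
      outputFactor, div_eq_mul_inv]

lemma kron_Kr1_mulVec_psiEA (s : ℝ) :
    ((1 : Matrix (Fin 3) (Fin 3) ℂ) ⊗ₖ Kr1 s) *ᵥ psiEA s = (outputFactor s)ᵀ 1 := by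
  funext p
  fin_cases p <;>
    simp [mulVec, dotProduct, Fintype.sum_prod_type, Fin.sum_univ_three, one_apply, Kr1, psiEA,
      outputFactor, div_eq_mul_inv]

lemma ofReal_sqrt_mul_self {x : ℝ} (hx : 0 ≤ x) : (Real.sqrt x : ℂ) * (Real.sqrt x : ℂ) = x := by
  rw [← Complex.ofReal_mul, Real.mul_self_sqrt hx]

lemma outputFactor_conjTranspose_mul_self {s : ℝ} (hs0 : 0 ≤ s) (hs1 : s ≤ 1) :
    (outputFactor s)ᴴ * outputFactor s = diagonal fun k => ((![s, 1 - s] k : ℝ) : ℂ) := by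
  have ha := ofReal_sqrt_mul_self (x := s / 2) (by linarith)
  have hb := ofReal_sqrt_mul_self (x := (1 - s) / 2) (by linarith)
  ext k l
  fin_cases k <;> fin_cases l <;>
    simp [outputFactor, mul_apply, Fin.sum_univ_three, Fintype.sum_prod_type, -Real.sqrt_div',
      -Real.sqrt_div, ha, hb]

lemma ptraceB_outputFactor {s : ℝ} (hs0 : 0 ≤ s) (hs1 : s ≤ 1) :
    ptraceB (outputFactor s * (outputFactor s)ᴴ) =
      diagonal fun i => ((![1/2, s/2, (1 - s)/2] i : ℝ) : ℂ) := by
  have ha := ofReal_sqrt_mul_self (x := s / 2) (by linarith)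
  have hb := ofReal_sqrt_mul_self (x := (1 - s) / 2) (by linarith)
  ext i k
  fin_cases i <;> fin_cases k <;>
    simp [ptraceB, outputFactor, mul_apply, Fin.sum_univ_three, Fin.sum_univ_two, -Real.sqrt_div',
      -Real.sqrt_div, ha, hb]
  ring

lemma ptraceA_outputFactor {s : ℝ} (hs0 : 0 ≤ s) (hs1 : s ≤ 1) :
    ptraceA (outputFactor s * (outputFactor s)ᴴ) =
      diagonal fun j => ((![s/2, (1 - s)/2, 1/2] j : ℝ) : ℂ) := by
  have ha := ofReal_sqrt_mul_self (x := s / 2) (by linarith)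
  have hb := ofReal_sqrt_mul_self (x := (1 - s) / 2) (by linarith)
  ext i k
  fin_cases i <;> fin_cases k <;>
    simp [ptraceA, outputFactor, mul_apply, Fin.sum_univ_three, Fin.sum_univ_two, -Real.sqrt_div',
      -Real.sqrt_div, ha, hb]
  ring

lemma half_mul_logb_half (x : ℝ) : x / 2 * Real.logb 2 (x / 2) = (x * Real.logb 2 x - x) / 2 := by
  rcases eq_or_ne x 0 with rfl | hx
  · simp
  · rw [Real.logb_div hx two_ne_zero, Real.logb_self_eq_one one_lt_two]
    ring

/-- Quantum mutual information of (I ⊗ N_s)(|ψ⟩⟨ψ|) equals 2, hence C_E(N_s) ≥ 2. -/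
theorem stmt7 (s : ℝ) (hs : s ∈ Set.Icc (0 : ℝ) (1/2)) :
    let P : Matrix (Fin 3 × Fin 3) (Fin 3 × Fin 3) ℂ :=
      Matrix.vecMulVec (psiEA s) (star (psiEA s))
    let σ : Matrix (Fin 3 × Fin 3) (Fin 3 × Fin 3) ℂ :=
      ((1 : Matrix (Fin 3) (Fin 3) ℂ) ⊗ₖ Kr0 s) * P * ((1 : Matrix (Fin 3) (Fin 3) ℂ) ⊗ₖ Kr0 s)ᴴ +
      ((1 : Matrix (Fin 3) (Fin 3) ℂ) ⊗ₖ Kr1 s) * P * ((1 : Matrix (Fin 3) (Fin 3) ℂ) ⊗ₖ Kr1 s)ᴴ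
    vnEntropy (ptraceB σ) + vnEntropy (ptraceA σ) - vnEntropy σ = 2 := by
  intro P σ
  obtain ⟨hs0, hs_half⟩ := hs
  have hs1 : s ≤ 1 := by linarith
  have hσ : σ = outputFactor s * (outputFactor s)ᴴ := by
    rw [mul_eq_sum_vecMulVec, Fin.sum_univ_two]
    simp only [σ, P, mul_vecMulVec_star_mul_conjTranspose, kron_Kr0_mulVec_psiEA,
      kron_Kr1_mulVec_psiEA]
    rfl
  rw [hσ, ptraceB_outputFactor hs0 hs1, ptraceA_outputFactor hs0 hs1,
    vnEntropy_mul_conjTranspose_self, outputFactor_conjTranspose_mul_self hs0 hs1,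
    vnEntropy_diagonal, vnEntropy_diagonal, vnEntropy_diagonal]
  simp only [Fin.sum_univ_three, Fin.sum_univ_two, Matrix.cons_val_zero, Matrix.cons_val_one,
    Matrix.cons_val_two, Matrix.head_cons, Matrix.tail_cons, half_mul_logb_half, Real.logb_one]
  ring
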